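/- Let a be a positive integer, let χ_a be the arithmetic function with χ_a(d) = 1 if d ∣ a and χ_a(d) = 0 otherwise, and let g : ℕ⁺ → ℂ be a multiplicative function. Then for every positive integer n, Σ_{lcm(x,y)=n} μ(x) χ_a(x) g(y) = μ(gcd(n, a)) · I(gcd(n / gcd(n, a), a)) · g(n / gcd(n, a)), where μ is the Möbius function and I(k) equals 1 if k = 1 and 0 otherwise. -/

import Mathlib

/-!
Write `F = f * ζ` and `G = g * ζ`. Grouping the pairs of divisors of `n` by their lcm gives
`F · G = L * ζ`, where `L` is the lcm-convolution of `f` and `g`.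

For `f = μ · χ_a` one has `F(n) = ∑_{d ∣ gcd(n, a)} μ(d)`, the indicator `c` of the `n` coprime to
`a`. Since `c` is completely multiplicative, `c · (g * ζ) = (c · g) * c = (c · g) * f * ζ`, and
cancelling the unit `ζ` gives `L = f * (c · g)`. In this Dirichlet convolution only the term
`d = gcd(n, a)` survives: if `d ∣ a` and `n / d` is coprime to `a`, then `gcd(n, a) = d`.
-/

open Finset ArithmeticFunction
open scoped ArithmeticFunction.zeta ArithmeticFunction.Moebius

namespace ArithmeticFunction

variable {R : Type*}

def lcmConv [Semiring R] (f g : ArithmeticFunction R) : ArithmeticFunction R :=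
  ⟨fun n => ∑ x ∈ (n.divisors ×ˢ n.divisors).filter (fun x => x.1.lcm x.2 = n), f x.1 * g x.2,
    by simp⟩

theorem lcmConv_apply [Semiring R] (f g : ArithmeticFunction R) (n : ℕ) :
    lcmConv f g n =
      ∑ x ∈ (n.divisors ×ˢ n.divisors).filter (fun x => x.1.lcm x.2 = n), f x.1 * g x.2 :=
  rfl

theorem lcmConv_mul_zeta [CommSemiring R] (f g : ArithmeticFunction R) :
    lcmConv f g * ζ = (f * ζ).pmul (g * ζ) := by
  ext n
  rcases eq_or_ne n 0 with rfl | hn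
  · simp
  rw [coe_mul_zeta_apply, pmul_apply, coe_mul_zeta_apply, coe_mul_zeta_apply, sum_mul_sum,
    ← sum_product', ← sum_fiberwise_of_maps_to (g := fun x : ℕ × ℕ => x.1.lcm x.2)
      (t := n.divisors) fun x hx => ?_]
  · refine sum_congr rfl fun m hm => ?_
    rw [lcmConv_apply]
    refine sum_congr ?_ fun _ _ => rfl
    obtain ⟨hmn, -⟩ := Nat.mem_divisors.1 hm
    have hm0 : m ≠ 0 := (Nat.pos_of_mem_divisors hm).ne'
    ext x
    simp only [mem_filter, mem_product, Nat.mem_divisors]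
    constructor
    · rintro ⟨⟨⟨h1, -⟩, h2, -⟩, hx⟩
      exact ⟨⟨⟨h1.trans hmn, hn⟩, h2.trans hmn, hn⟩, hx⟩
    · rintro ⟨-, rfl⟩
      exact ⟨⟨⟨Nat.dvd_lcm_left .., hm0⟩, Nat.dvd_lcm_right .., hm0⟩, rfl⟩
  · simp only [mem_product, Nat.mem_divisors] at hx ⊢
    exact ⟨Nat.lcm_dvd hx.1.1 hx.2.1, hn⟩

theorem pmul_mul_of_map_mul [CommSemiring R] {c : ArithmeticFunction R}
    (hc : ∀ m n, c (m * n) = c m * c n) (f g : ArithmeticFunction R) :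
    c.pmul (f * g) = c.pmul f * c.pmul g := by
  ext n
  simp only [pmul_apply, mul_apply, mul_sum]
  refine sum_congr rfl fun x hx => ?_
  rw [← (Nat.mem_divisorsAntidiagonal.1 hx).1, hc]
  ring

theorem lcmConv_eq_mul_pmul [CommRing R] {f c : ArithmeticFunction R} (hfc : f * ζ = c)
    (hc : ∀ m n, c (m * n) = c m * c n) (g : ArithmeticFunction R) :
    lcmConv f g = f * c.pmul g := by
  apply (isUnit_of_invertible (ζ : ArithmeticFunction R)).mul_left_injective
  calc lcmConv f g * ζ = c.pmul (g * ζ) := by rw [lcmConv_mul_zeta, hfc]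
    _ = c.pmul g * c := by rw [pmul_mul_of_map_mul hc, pmul_zeta]
    _ = f * c.pmul g * ζ := by rw [← hfc]; ring

section Coprime

variable [Ring R] (a : ℕ)

def moebiusDvd : ArithmeticFunction R :=
  ⟨fun d => if d ∣ a then (μ d : R) else 0, by simp⟩

def coprimeIndicator : ArithmeticFunction R :=
  ⟨fun n => if n ≠ 0 ∧ n.Coprime a then 1 else 0, by simp⟩

theorem moebiusDvd_apply (d : ℕ) : moebiusDvd (R := R) a d = if d ∣ a then (μ d : R) else 0 :=
  rfl

theorem coprimeIndicator_apply (n : ℕ) :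
    coprimeIndicator (R := R) a n = if n ≠ 0 ∧ n.Coprime a then 1 else 0 :=
  rfl

theorem coprimeIndicator_map_mul (m n : ℕ) :
    coprimeIndicator (R := R) a (m * n) = coprimeIndicator a m * coprimeIndicator a n := by
  simp only [coprimeIndicator_apply, ite_zero_mul_ite_zero, mul_one]
  exact if_congr (by rw [mul_ne_zero_iff, Nat.coprime_mul_iff_left]; tauto) rfl rfl

theorem sum_divisors_moebius (m : ℕ) : ∑ d ∈ m.divisors, (μ d : R) = if m = 1 then 1 else 0 := by
  have h := congrArg (· m) (coe_moebius_mul_coe_zeta (R := R))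
  simp only [coe_mul_zeta_apply, intCoe_apply, one_apply] at h
  exact h

theorem moebiusDvd_mul_zeta : moebiusDvd a * (ζ : ArithmeticFunction R) = coprimeIndicator a := by
  ext n
  rcases eq_or_ne n 0 with rfl | hn
  · simp
  have hdiv : n.divisors.filter (· ∣ a) = (n.gcd a).divisors := by
    rw [← Nat.divisors_filter_dvd_of_dvd hn (Nat.gcd_dvd_left n a)]
    exact filter_congr fun d hd => by
      rw [Nat.dvd_gcd_iff, and_iff_right (Nat.dvd_of_mem_divisors hd)]
  rw [coe_mul_zeta_apply, coprimeIndicator_apply]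
  simp only [moebiusDvd_apply]
  rw [← sum_filter, hdiv, sum_divisors_moebius]
  exact if_congr (and_iff_right hn).symm rfl rfl

theorem moebiusDvd_mul_coprimeIndicator_pmul_apply (g : ArithmeticFunction R) {n : ℕ}
    (hn : n ≠ 0) :
    (moebiusDvd a * (coprimeIndicator a).pmul g : ArithmeticFunction R) n =
      μ (n.gcd a) * (if (n / n.gcd a).Coprime a then 1 else 0) * g (n / n.gcd a) := by
  have hgcd : n.gcd a ∣ n := Nat.gcd_dvd_left n a
  have hq : n / n.gcd a ≠ 0 := fun h => hn (by rw [← Nat.mul_div_cancel' hgcd, h, mul_zero])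
  rw [mul_apply, sum_eq_single_of_mem (n.gcd a, n / n.gcd a)
    (Nat.mem_divisorsAntidiagonal.2 ⟨Nat.mul_div_cancel' hgcd, hn⟩)]
  · simp only [moebiusDvd_apply, pmul_apply, coprimeIndicator_apply,
      if_pos (Nat.gcd_dvd_right n a), ne_eq, hq, not_false_eq_true, true_and, mul_assoc]
  · rintro ⟨d, m⟩ hdm hne
    obtain ⟨rfl, hn⟩ := Nat.mem_divisorsAntidiagonal.1 hdm
    rw [moebiusDvd_apply, pmul_apply, coprimeIndicator_apply]
    split_ifs with hd hm
    · refine absurd ?_ hne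
      have hd0 : d ≠ 0 := left_ne_zero_of_mul hn
      have hdgcd : (d * m).gcd a = d := by
        rw [hm.2.gcd_mul_right_cancel d, Nat.gcd_eq_left hd]
      rw [hdgcd, Nat.mul_div_cancel_left m (Nat.pos_of_ne_zero hd0)]
    all_goals simp

end Coprime

end ArithmeticFunction

open Finset in
theorem lcm_convolution_moebius_chi_multiplicative_general (a : ℕ) (g : ℕ → ℂ)
    (n : ℕ) (hn : 0 < n) :
    ∑ x ∈ (n.divisors ×ˢ n.divisors).filter (fun x => Nat.lcm x.1 x.2 = n),
        ((ArithmeticFunction.moebius x.1 : ℤ) : ℂ) * (if x.1 ∣ a then 1 else 0) * g x.2 =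
      ((ArithmeticFunction.moebius (Nat.gcd n a) : ℤ) : ℂ) *
        (if Nat.gcd (n / Nat.gcd n a) a = 1 then 1 else 0) *
        g (n / Nat.gcd n a) := by
  have hq : n / n.gcd a ≠ 0 :=
    (Nat.div_pos (Nat.gcd_le_left a hn) (Nat.gcd_pos_of_pos_left a hn)).ne'
  calc _ = lcmConv (moebiusDvd a) (toArithmeticFunction g) n := by
        refine sum_congr rfl fun x hx => ?_
        have hx2 : x.2 ≠ 0 := (Nat.pos_of_mem_divisors (mem_product.1 (mem_filter.1 hx).1).2).ne'
        simp [moebiusDvd_apply, toArithmeticFunction, hx2]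
    _ = (moebiusDvd a * (coprimeIndicator a).pmul (toArithmeticFunction g) :
          ArithmeticFunction ℂ) n := by
        rw [lcmConv_eq_mul_pmul (moebiusDvd_mul_zeta a) (coprimeIndicator_map_mul a)]
    _ = _ := by
        rw [moebiusDvd_mul_coprimeIndicator_pmul_apply a _ hn.ne']
        simp [toArithmeticFunction, hq, Nat.Coprime]

open Finset in
/-- For a positive integer `a`, the indicator `χ_a` of divisors of `a`, and a multiplicative
function `g`, for every `n ≥ 1`:
`Σ_{lcm(x,y)=n} μ(x) χ_a(x) g(y) = μ(gcd(n,a)) · I(gcd(n/gcd(n,a), a)) · g(n/gcd(n,a))`. -/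
theorem lcm_convolution_moebius_chi_multiplicative (a : ℕ) (ha : 0 < a) (g : ℕ → ℂ)
    (hg0 : ∃ k, g k ≠ 0) (hmul : ∀ x y : ℕ, Nat.Coprime x y → g (x * y) = g x * g y)
    (n : ℕ) (hn : 0 < n) :
    ∑ x ∈ (n.divisors ×ˢ n.divisors).filter (fun x => Nat.lcm x.1 x.2 = n),
        ((ArithmeticFunction.moebius x.1 : ℤ) : ℂ) * (if x.1 ∣ a then 1 else 0) * g x.2 =
      ((ArithmeticFunction.moebius (Nat.gcd n a) : ℤ) : ℂ) *
        (if Nat.gcd (n / Nat.gcd n a) a = 1 then 1 else 0) *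
        g (n / Nat.gcd n a) :=
  lcm_convolution_moebius_chi_multiplicative_general a g n hn
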